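/- arXiv:2107.04458 — 3 statements merged into one kernel-verified Lean document; each statement's English description precedes it below -/
import Mathlib

section
/- Let X be a random variable with the Gamma(a, s) distribution and let g(x) = α(exp(βx) − 1) with α > 0 and β > 0. Then the law of g(X) (the pushforward of the Gamma(a,s) measure under g) has density h(x) = (1/(α·Γ(a)·β^a·s^a)) · (ln(1 + x/α))^(a−1) · (1 + x/α)^(−(βs+1)/(βs)) with respect to Lebesgue measure on (0, ∞), and density 0 on (−∞, 0]. -/
/-!
The map `g x = α (exp (β x) - 1)` is a strictly increasing differentiable bijection of `ℝ` onto
`(-α, ∞)` with `g' x = α β exp (β x)`. By the one-dimensional change of variables formula, `g`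
pushes a density `f` forward to any density `h` vanishing off the range of `g` with
`f = |g'| · (h ∘ g)`. For the Gamma density this identity reduces, for `x > 0`, to
`1 + g x / α = exp (β x)` and `log (1 + g x / α) = β x`; for `x ≤ 0` both sides vanish.
-/

open MeasureTheory Set

/-- The Gamma distribution with shape `a > 0` and scale `s > 0`: the measure on `ℝ`
with density `x^(a−1)·exp(−x/s)/(Γ(a)·s^a)` for `x > 0` and `0` otherwise. -/
noncomputable def gammaScaleMeasure (a s : ℝ) : Measure ℝ :=
  volume.withDensity fun x =>
    ENNReal.ofReal
      (if 0 < x then x ^ (a - 1) * Real.exp (-x / s) / (Real.Gamma a * s ^ a) else 0)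

theorem map_withDensity_eq_withDensity_of_hasDerivAt {g g' : ℝ → ℝ} {f h : ℝ → ENNReal}
    (hinj : Function.Injective g) (hderiv : ∀ x, HasDerivAt g (g' x) x)
    (hf : ∀ x, f x = ENNReal.ofReal |g' x| * h (g x)) (hh : ∀ y ∉ range g, h y = 0) :
    (volume.withDensity f).map g = volume.withDensity h := by
  have hg : Measurable g :=
    (continuous_iff_continuousAt.2 fun x => (hderiv x).continuousAt).measurable
  refine Measure.ext fun A hA => ?_
  rw [Measure.map_apply hg hA, withDensity_apply _ (hg hA), withDensity_apply _ hA]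
  calc ∫⁻ x in g ⁻¹' A, f x
      = ∫⁻ x in g ⁻¹' A, ENNReal.ofReal |g' x| * h (g x) := by simp only [hf]
    _ = ∫⁻ y in g '' (g ⁻¹' A), h y :=
      (lintegral_image_eq_lintegral_abs_deriv_mul (hg hA)
        (fun x _ => (hderiv x).hasDerivWithinAt) hinj.injOn h).symm
    _ = ∫⁻ y in A, h y := by
      rw [image_preimage_eq_inter_range, inter_comm, ← Measure.restrict_restrict' hA]
      exact setLIntegral_eq_of_support_subset (Function.support_subset_iff'.2 hh)

section expShift

variable {α β : ℝ}

noncomputable def expShift (α β x : ℝ) : ℝ := α * (Real.exp (β * x) - 1)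

theorem hasDerivAt_expShift (x : ℝ) :
    HasDerivAt (expShift α β) (α * (β * Real.exp (β * x))) x := by
  have := (((hasDerivAt_id x).const_mul β).exp.sub_const 1).const_mul α
  rwa [id, mul_one, mul_comm (Real.exp _)] at this

theorem one_add_expShift_div (hα : α ≠ 0) (x : ℝ) :
    1 + expShift α β x / α = Real.exp (β * x) := by
  rw [expShift, mul_div_cancel_left₀ _ hα]
  ring

theorem expShift_pos_iff (hα : 0 < α) (hβ : 0 < β) {x : ℝ} :
    0 < expShift α β x ↔ 0 < x := by
  rw [expShift, mul_pos_iff_of_pos_left hα, sub_pos, Real.one_lt_exp_iff,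
    mul_pos_iff_of_pos_left hβ]

theorem strictMono_expShift (hα : 0 < α) (hβ : 0 < β) : StrictMono (expShift α β) :=
  fun _ _ hxy => mul_lt_mul_of_pos_left (sub_lt_sub_right
    (Real.exp_lt_exp.2 (mul_lt_mul_of_pos_left hxy hβ)) 1) hα

theorem expShift_log_one_add_div (hα : 0 < α) (hβ : 0 < β) {y : ℝ} (hy : -α < y) :
    expShift α β (Real.log (1 + y / α) / β) = y := by
  have : 0 < 1 + y / α := by
    rw [one_add_div hα.ne']
    exact div_pos (by linarith) hα
  rw [expShift, mul_div_cancel₀ _ hβ.ne', Real.exp_log this]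
  field_simp
  ring

end expShift

section densities

variable {a s α β : ℝ}

noncomputable def gammaScalePDFReal (a s x : ℝ) : ℝ :=
  if 0 < x then x ^ (a - 1) * Real.exp (-x / s) / (Real.Gamma a * s ^ a) else 0

noncomputable def expGammaPDFReal (a s α β y : ℝ) : ℝ :=
  if 0 < y then
    Real.log (1 + y / α) ^ (a - 1) * (1 + y / α) ^ (-((β * s + 1) / (β * s))) /
      (α * Real.Gamma a * β ^ a * s ^ a)
  else 0

theorem gammaScaleMeasure_eq_withDensity (a s : ℝ) :
    gammaScaleMeasure a s = volume.withDensity fun x => ENNReal.ofReal (gammaScalePDFReal a s x) :=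
  rfl

theorem gammaScalePDFReal_eq_abs_deriv_mul_expGammaPDFReal (hs : s ≠ 0) (hα : 0 < α)
    (hβ : 0 < β) (x : ℝ) :
    gammaScalePDFReal a s x =
      |α * (β * Real.exp (β * x))| * expGammaPDFReal a s α β (expShift α β x) := by
  unfold gammaScalePDFReal expGammaPDFReal
  rcases le_or_gt x 0 with hx | hx
  · rw [if_neg hx.not_gt, if_neg ((expShift_pos_iff hα hβ).not.2 hx.not_gt), mul_zero]
  have hexp : Real.exp (β * x) * Real.exp (β * x * -((β * s + 1) / (β * s))) =
      Real.exp (-x / s) := by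
    rw [← Real.exp_add]
    congr 1
    field_simp
    ring
  rw [if_pos hx, if_pos ((expShift_pos_iff hα hβ).2 hx), one_add_expShift_div hα.ne',
    Real.log_exp, abs_of_pos (by positivity), Real.mul_rpow hβ.le hx.le, ← Real.exp_mul,
    Real.rpow_sub_one hβ.ne', ← hexp]
  field_simp

theorem expGammaPDFReal_eq_zero_of_notMem_range (hα : 0 < α) (hβ : 0 < β) {y : ℝ}
    (hy : y ∉ range (expShift α β)) : expGammaPDFReal a s α β y = 0 :=
  if_neg fun hy0 => hy ⟨_, expShift_log_one_add_div hα hβ (by linarith)⟩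

end densities

theorem law_expGamma_density_general {Ω : Type*} [MeasurableSpace Ω] (P : Measure Ω)
    (X : Ω → ℝ) (hX : Measurable X)
    (a s α β : ℝ) (hs : 0 < s) (hα : 0 < α) (hβ : 0 < β)
    (hlaw : Measure.map X P = gammaScaleMeasure a s) :
    Measure.map (fun ω => α * (Real.exp (β * X ω) - 1)) P =
      volume.withDensity fun x =>
        ENNReal.ofReal
          (if 0 < x then
            Real.log (1 + x / α) ^ (a - 1) * (1 + x / α) ^ (-((β * s + 1) / (β * s))) /
              (α * Real.Gamma a * β ^ a * s ^ a)
          else 0) := by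
  have hmono := strictMono_expShift hα hβ
  change Measure.map (expShift α β ∘ X) P =
    volume.withDensity fun y => ENNReal.ofReal (expGammaPDFReal a s α β y)
  rw [← Measure.map_map hmono.monotone.measurable hX, hlaw, gammaScaleMeasure_eq_withDensity]
  refine map_withDensity_eq_withDensity_of_hasDerivAt hmono.injective hasDerivAt_expShift
    (fun x => ?_) (fun y hy => ?_)
  · rw [← ENNReal.ofReal_mul (abs_nonneg _)]
    exact congrArg ENNReal.ofReal
      (gammaScalePDFReal_eq_abs_deriv_mul_expGammaPDFReal hs.ne' hα hβ x)
  · rw [expGammaPDFReal_eq_zero_of_notMem_range hα hβ hy, ENNReal.ofReal_zero]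

/-- **Proposition 1 of the paper.** If `X` has the `Gamma(a, s)` distribution and
`g(x) = α(exp(βx) − 1)` with `α > 0`, `β > 0`, then the law of `g(X)` has density
`h(x) = (ln(1 + x/α))^(a−1) · (1 + x/α)^(−(βs+1)/(βs)) / (α·Γ(a)·β^a·s^a)`
with respect to Lebesgue measure on `(0, ∞)` and density `0` on `(−∞, 0]`. -/
theorem law_expGamma_density {Ω : Type*} [MeasurableSpace Ω] (P : Measure Ω)
    [IsProbabilityMeasure P] (X : Ω → ℝ) (hX : Measurable X)
    (a s α β : ℝ) (ha : 0 < a) (hs : 0 < s) (hα : 0 < α) (hβ : 0 < β)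
    (hlaw : Measure.map X P = gammaScaleMeasure a s) :
    Measure.map (fun ω => α * (Real.exp (β * X ω) - 1)) P =
      volume.withDensity fun x =>
        ENNReal.ofReal
          (if 0 < x then
            Real.log (1 + x / α) ^ (a - 1) * (1 + x / α) ^ (-((β * s + 1) / (β * s))) /
              (α * Real.Gamma a * β ^ a * s ^ a)
          else 0) :=
  law_expGamma_density_general P X hX a s α β hs hα hβ hlaw
end

section
/- Let X be a random variable whose law is the mixed zero-Gamma measure μ_mix = p·δ₀ + (1 − p)·Gamma(a, s), with 0 ≤ p ≤ 1, a > 0, s > 0, and let g(x) = α(exp(βx) − 1) with α > 0, β > 0 and 2βs < 1. Then Var(g(X)) = α²·(1 − p)·[ 1/(1 − 2βs)^a − (1 − p)/(1 − βs)^(2a) − 2p/(1 − βs)^a + p ]. -/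
/-!
Exponential tilting: the Gamma(a, rate r) density times `exp (t * x)` is `(1 - t / r) ^ (-a)` times
the Gamma(a, rate r - t) density, so for `t * s < 1` the zero-Gamma law has moment generating
function `p + (1 - p) * (1 - t * s) ^ (-a)`. Since `Var(α (exp (β X) - 1)) = α² Var(exp (β X))
= α² (E exp (2 β X) - (E exp (β X))²)`, the formula follows by evaluating it at `β` and `2 β`.
-/

open MeasureTheory

/-- The mixed zero-Gamma measure `μ_mix = p·δ₀ + (1 − p)·Gamma(a, s)` of the paper
(Eq. (6)): point mass `p` at `0` mixed with the `Gamma(a, s)` distribution. -/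
noncomputable def zeroGammaMeasure (p a s : ℝ) : Measure ℝ :=
  ENNReal.ofReal p • Measure.dirac (0 : ℝ) + ENNReal.ofReal (1 - p) • gammaScaleMeasure a s

open ProbabilityTheory Real

namespace ProbabilityTheory

variable {a r : ℝ}

lemma integrable_gammaMeasure_iff (ha : 0 < a) (hr : 0 < r) {g : ℝ → ℝ} :
    Integrable g (gammaMeasure a r) ↔ Integrable (fun x => gammaPDFReal a r x * g x) := by
  rw [gammaMeasure, integrable_withDensity_iff (f := gammaPDF a r)
    (by unfold gammaPDF; fun_prop) (ae_of_all _ fun _ => ENNReal.ofReal_lt_top)]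
  simp only [gammaPDF, ENNReal.toReal_ofReal (gammaPDFReal_nonneg ha hr _), mul_comm]

lemma integral_gammaMeasure (ha : 0 < a) (hr : 0 < r) (g : ℝ → ℝ) :
    ∫ x, g x ∂gammaMeasure a r = ∫ x, gammaPDFReal a r x * g x := by
  rw [gammaMeasure, integral_withDensity_eq_integral_toReal_smul (f := gammaPDF a r)
    (by unfold gammaPDF; fun_prop) (ae_of_all _ fun _ => ENNReal.ofReal_lt_top)]
  simp only [gammaPDF, ENNReal.toReal_ofReal (gammaPDFReal_nonneg ha hr _), smul_eq_mul]

lemma integrable_gammaPDFReal (ha : 0 < a) (hr : 0 < r) : Integrable (gammaPDFReal a r) := by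
  have := isProbabilityMeasure_gammaMeasure ha hr
  simpa using (integrable_gammaMeasure_iff ha hr).1 (integrable_const (1 : ℝ))

lemma integral_gammaPDFReal (ha : 0 < a) (hr : 0 < r) : ∫ x, gammaPDFReal a r x = 1 := by
  have := isProbabilityMeasure_gammaMeasure ha hr
  simpa using (integral_gammaMeasure ha hr (fun _ => 1)).symm

lemma gammaPDFReal_mul_exp_mul {t : ℝ} (htr : t < r) (x : ℝ) :
    gammaPDFReal a r x * exp (t * x) = r ^ a / (r - t) ^ a * gammaPDFReal a (r - t) x := by
  have hrt : 0 < (r - t) ^ a := rpow_pos_of_pos (sub_pos.2 htr) a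
  unfold gammaPDFReal
  split_ifs
  · rw [show -((r - t) * x) = -(r * x) + t * x by ring, exp_add]
    field_simp
  · simp

lemma integrable_exp_mul_gammaMeasure (ha : 0 < a) (hr : 0 < r) {t : ℝ} (htr : t < r) :
    Integrable (fun x => exp (t * x)) (gammaMeasure a r) := by
  rw [integrable_gammaMeasure_iff ha hr]
  simp_rw [gammaPDFReal_mul_exp_mul htr]
  exact (integrable_gammaPDFReal ha (sub_pos.2 htr)).const_mul _

lemma integral_exp_mul_gammaMeasure (ha : 0 < a) (hr : 0 < r) {t : ℝ} (htr : t < r) :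
    ∫ x, exp (t * x) ∂gammaMeasure a r = (1 - t / r) ^ (-a) := by
  simp_rw [integral_gammaMeasure ha hr, gammaPDFReal_mul_exp_mul htr, integral_const_mul,
    integral_gammaPDFReal ha (sub_pos.2 htr), mul_one]
  rw [show 1 - t / r = (r - t) / r by field_simp, rpow_neg (div_pos (sub_pos.2 htr) hr).le,
    ← inv_rpow (div_pos (sub_pos.2 htr) hr).le, inv_div, div_rpow hr.le (sub_pos.2 htr).le]

end ProbabilityTheory

section

variable {p a s : ℝ}

lemma gammaScaleMeasure_eq_gammaMeasure (hs : 0 < s) :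
    gammaScaleMeasure a s = gammaMeasure a s⁻¹ := by
  refine withDensity_congr_ae ?_
  filter_upwards [volume.ae_ne 0] with x hx
  rw [gammaPDF, gammaPDFReal]
  rcases hx.lt_or_gt with hneg | hpos
  · rw [if_neg hneg.not_gt, if_neg hneg.not_ge]
  · rw [if_pos hpos, if_pos hpos.le, inv_rpow hs.le, neg_div, div_eq_inv_mul x s]
    ring_nf

lemma integrable_exp_mul_gammaScaleMeasure (ha : 0 < a) (hs : 0 < s) {t : ℝ} (hts : t * s < 1) :
    Integrable (fun x => exp (t * x)) (gammaScaleMeasure a s) := by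
  have hts' : t < s⁻¹ := by rwa [← lt_div_iff₀ hs, one_div] at hts
  rw [gammaScaleMeasure_eq_gammaMeasure hs]
  exact integrable_exp_mul_gammaMeasure ha (inv_pos.2 hs) hts'

lemma integral_exp_mul_gammaScaleMeasure (ha : 0 < a) (hs : 0 < s) {t : ℝ} (hts : t * s < 1) :
    ∫ x, exp (t * x) ∂gammaScaleMeasure a s = (1 - t * s) ^ (-a) := by
  have hts' : t < s⁻¹ := by rwa [← lt_div_iff₀ hs, one_div] at hts
  rw [gammaScaleMeasure_eq_gammaMeasure hs, integral_exp_mul_gammaMeasure ha (inv_pos.2 hs) hts',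
    div_inv_eq_mul]

lemma isProbabilityMeasure_zeroGammaMeasure (hp0 : 0 ≤ p) (hp1 : p ≤ 1) (ha : 0 < a)
    (hs : 0 < s) : IsProbabilityMeasure (zeroGammaMeasure p a s) := by
  have := isProbabilityMeasure_gammaMeasure ha (inv_pos.2 hs)
  constructor
  rw [zeroGammaMeasure, gammaScaleMeasure_eq_gammaMeasure hs]
  simp only [Measure.add_apply, Measure.smul_apply, measure_univ, smul_eq_mul, mul_one]
  rw [← ENNReal.ofReal_add hp0 (sub_nonneg.2 hp1), add_sub_cancel, ENNReal.ofReal_one]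

lemma integrable_zeroGammaMeasure {f : ℝ → ℝ} (hf : Integrable f (gammaScaleMeasure a s)) :
    Integrable f (zeroGammaMeasure p a s) :=
  ((integrable_dirac enorm_lt_top).smul_measure ENNReal.ofReal_ne_top).add_measure
    (hf.smul_measure ENNReal.ofReal_ne_top)

lemma integral_zeroGammaMeasure (hp0 : 0 ≤ p) (hp1 : p ≤ 1) {f : ℝ → ℝ}
    (hf : Integrable f (gammaScaleMeasure a s)) :
    ∫ x, f x ∂zeroGammaMeasure p a s = p * f 0 + (1 - p) * ∫ x, f x ∂gammaScaleMeasure a s := by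
  rw [zeroGammaMeasure, integral_add_measure
    ((integrable_dirac enorm_lt_top).smul_measure ENNReal.ofReal_ne_top)
    (hf.smul_measure ENNReal.ofReal_ne_top), integral_smul_measure, integral_smul_measure,
    integral_dirac, ENNReal.toReal_ofReal hp0, ENNReal.toReal_ofReal (sub_nonneg.2 hp1),
    smul_eq_mul, smul_eq_mul]

lemma integral_exp_mul_zeroGammaMeasure (hp0 : 0 ≤ p) (hp1 : p ≤ 1) (ha : 0 < a) (hs : 0 < s)
    {t : ℝ} (hts : t * s < 1) :
    ∫ x, exp (t * x) ∂zeroGammaMeasure p a s = p + (1 - p) * (1 - t * s) ^ (-a) := by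
  rw [integral_zeroGammaMeasure hp0 hp1 (integrable_exp_mul_gammaScaleMeasure ha hs hts),
    integral_exp_mul_gammaScaleMeasure ha hs hts, mul_zero, exp_zero, mul_one]

end

lemma memLp_two_exp_mul {μ : Measure ℝ} {β : ℝ} (h : Integrable (fun x => exp (2 * β * x)) μ) :
    MemLp (fun x => exp (β * x)) 2 μ := by
  rw [memLp_two_iff_integrable_sq (by fun_prop)]
  simpa only [← exp_nat_mul, Nat.cast_ofNat, mul_assoc] using h

lemma variance_const_mul_exp_mul_sub_one {μ : Measure ℝ} [IsProbabilityMeasure μ] (α : ℝ)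
    {β : ℝ} (h : Integrable (fun x => exp (2 * β * x)) μ) :
    Var[fun x => α * (exp (β * x) - 1); μ] =
      α ^ 2 * (∫ x, exp (2 * β * x) ∂μ - (∫ x, exp (β * x) ∂μ) ^ 2) := by
  rw [variance_const_mul, variance_sub_const (by fun_prop), variance_eq_sub (memLp_two_exp_mul h)]
  simp only [Pi.pow_apply, ← exp_nat_mul, Nat.cast_ofNat, mul_assoc]

theorem zeroExpGamma_variance_general {Ω : Type*} [MeasurableSpace Ω] (P : Measure Ω)
    (X : Ω → ℝ) (hX : Measurable X)
    (p a s α β : ℝ) (hp0 : 0 ≤ p) (hp1 : p ≤ 1) (ha : 0 < a) (hs : 0 < s)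
    (hβs : 2 * β * s < 1)
    (hlaw : Measure.map X P = zeroGammaMeasure p a s) :
    (∫ ω, (α * (Real.exp (β * X ω) - 1)) ^ 2 ∂P) -
        (∫ ω, α * (Real.exp (β * X ω) - 1) ∂P) ^ 2 =
      α ^ 2 * (1 - p) *
        (1 / (1 - 2 * β * s) ^ a - (1 - p) / (1 - β * s) ^ (2 * a) -
          2 * p / (1 - β * s) ^ a + p) := by
  have hβs₁ : β * s < 1 := by rcases le_or_gt 0 (β * s) with h | h <;> linarith
  have := isProbabilityMeasure_zeroGammaMeasure hp0 hp1 ha hs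
  have hint : Integrable (fun x => exp (2 * β * x)) (zeroGammaMeasure p a s) :=
    integrable_zeroGammaMeasure (integrable_exp_mul_gammaScaleMeasure ha hs hβs)
  have hmem : MemLp (fun x => α * (exp (β * x) - 1)) 2 (zeroGammaMeasure p a s) :=
    ((memLp_two_exp_mul hint).sub (memLp_const 1)).const_mul α
  have hlaw_integral : ∀ f : ℝ → ℝ, Continuous f →
      ∫ ω, f (X ω) ∂P = ∫ x, f x ∂zeroGammaMeasure p a s := fun f hf => by
    rw [← hlaw, integral_map hX.aemeasurable hf.aestronglyMeasurable]
  have hsq : (1 - β * s) ^ (2 * a) = ((1 - β * s) ^ a) ^ 2 := by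
    rw [mul_comm 2 a, rpow_mul (by linarith), rpow_two]
  calc _ = Var[fun x => α * (exp (β * x) - 1); zeroGammaMeasure p a s] := by
        rw [hlaw_integral (fun x => (α * (exp (β * x) - 1)) ^ 2) (by fun_prop),
          hlaw_integral (fun x => α * (exp (β * x) - 1)) (by fun_prop)]
        exact (variance_eq_sub hmem).symm
    _ = _ := by
      rw [variance_const_mul_exp_mul_sub_one α hint,
        integral_exp_mul_zeroGammaMeasure hp0 hp1 ha hs hβs,
        integral_exp_mul_zeroGammaMeasure hp0 hp1 ha hs hβs₁,
        rpow_neg (by linarith), rpow_neg (by linarith), hsq]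
      field_simp
      ring

/-- Variance of the zero-ExpGamma distribution (Eq. (12) of the paper): if the law of `X`
is the mixed zero-Gamma measure and `g(x) = α(exp(βx) − 1)` with `α > 0`, `β > 0`,
`2βs < 1`, then (with `Var(Y) = E[Y²] − (E[Y])²`)
`Var(g(X)) = α²·(1 − p)·[1/(1 − 2βs)^a − (1 − p)/(1 − βs)^(2a) − 2p/(1 − βs)^a + p]`. -/
theorem zeroExpGamma_variance {Ω : Type*} [MeasurableSpace Ω] (P : Measure Ω)
    [IsProbabilityMeasure P] (X : Ω → ℝ) (hX : Measurable X)
    (p a s α β : ℝ) (hp0 : 0 ≤ p) (hp1 : p ≤ 1) (ha : 0 < a) (hs : 0 < s)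
    (hα : 0 < α) (hβ : 0 < β) (hβs : 2 * β * s < 1)
    (hlaw : Measure.map X P = zeroGammaMeasure p a s) :
    (∫ ω, (α * (Real.exp (β * X ω) - 1)) ^ 2 ∂P) -
        (∫ ω, α * (Real.exp (β * X ω) - 1) ∂P) ^ 2 =
      α ^ 2 * (1 - p) *
        (1 / (1 - 2 * β * s) ^ a - (1 - p) / (1 - β * s) ^ (2 * a) -
          2 * p / (1 - β * s) ^ a + p) :=
  zeroExpGamma_variance_general P X hX p a s α β hp0 hp1 ha hs hβs hlaw
end

section
/- Let X be a random variable with the Gamma(a, s) distribution and let γ > 0. Then the law of X^γ (the pushforward of the Gamma(a,s) measure under x ↦ x^γ) has density w(x) = (1/(γ·Γ(a)·s^a)) · x^(a/γ − 1) · exp(−x^(1/γ)/s) with respect to Lebesgue measure on (0, ∞), and density 0 on (−∞, 0]. -/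
open MeasureTheory

/-!
Substituting `x = y ^ (1 / γ)` in the Gamma integral over `(0, ∞)` turns the Gamma density
`f` into `(1 / γ) · y ^ (1 / γ - 1) · f (y ^ (1 / γ))`, which is the claimed density once the
powers of `y` are combined. Off `(0, ∞)` both densities vanish, so the behaviour of `x ^ γ` at
non-positive `x` does not matter.
-/

section

open Set Real

theorem lintegral_comp_rpow_Ioi (g : ℝ → ENNReal) {p : ℝ} (hp : p ≠ 0) :
    ∫⁻ x in Ioi 0, ENNReal.ofReal (|p| * x ^ (p - 1)) * g (x ^ p) = ∫⁻ y in Ioi 0, g y := by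
  have himage : (· ^ p) '' Ioi (0 : ℝ) = Ioi 0 := by
    ext y
    refine ⟨fun ⟨x, hx, hxy⟩ ↦ hxy ▸ rpow_pos_of_pos hx p,
      fun hy ↦ ⟨y ^ p⁻¹, rpow_pos_of_pos hy _, ?_⟩⟩
    simp [← rpow_mul hy.le, hp]
  conv_rhs => rw [← himage, lintegral_image_eq_lintegral_abs_deriv_mul measurableSet_Ioi
    (fun x (hx : 0 < x) ↦ (hasDerivAt_rpow_const (Or.inl hx.ne')).hasDerivWithinAt)
    ((rpow_left_injOn hp).mono Ioi_subset_Ici_self)]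
  refine setLIntegral_congr_fun measurableSet_Ioi fun x (hx : 0 < x) ↦ ?_
  rw [abs_mul, abs_of_nonneg (rpow_nonneg hx.le _)]

theorem map_rpow_withDensity_of_support_subset_Ioi {f : ℝ → ENNReal}
    (hf : Function.support f ⊆ Ioi 0) {γ : ℝ} (hγ : γ ≠ 0) :
    (volume.withDensity f).map (· ^ γ) = volume.withDensity ((Ioi 0).indicator
      fun y ↦ ENNReal.ofReal (|γ⁻¹| * y ^ (γ⁻¹ - 1)) * f (y ^ γ⁻¹)) := by
  have hmeas : Measurable fun x : ℝ ↦ x ^ γ := measurable_id.pow_const γ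
  ext A hA
  rw [Measure.map_apply hmeas hA, withDensity_apply _ (hmeas hA), withDensity_apply _ hA,
    ← lintegral_indicator (hmeas hA), ← lintegral_indicator hA, indicator_indicator, inter_comm,
    ← indicator_indicator, lintegral_indicator measurableSet_Ioi,
    ← setLIntegral_eq_of_support_subset
      (support_indicator.trans_subset (inter_subset_right.trans hf)),
    ← lintegral_comp_rpow_Ioi _ (inv_ne_zero hγ)]
  refine setLIntegral_congr_fun measurableSet_Ioi fun y (hy : 0 < y) ↦ ?_
  by_cases hyA : y ∈ A <;> simp [indicator, hyA, rpow_inv_rpow hy.le hγ]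

theorem gammaScaleMeasure_map_rpow (a s : ℝ) {γ : ℝ} (hγ : 0 < γ) :
    (gammaScaleMeasure a s).map (· ^ γ) =
      volume.withDensity fun x ↦ ENNReal.ofReal (if 0 < x then
        x ^ (a / γ - 1) * exp (-(x ^ (1 / γ)) / s) / (γ * Gamma a * s ^ a) else 0) := by
  rw [gammaScaleMeasure, map_rpow_withDensity_of_support_subset_Ioi
    (Function.support_subset_iff'.2 fun x (hx : ¬ 0 < x) ↦ by simp [hx]) hγ.ne']
  congr 1
  funext y
  by_cases hy : 0 < y
  · have hpow : y ^ (γ⁻¹ - 1) * (y ^ γ⁻¹) ^ (a - 1) = y ^ (a / γ - 1) := by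
      rw [← rpow_mul hy.le, ← rpow_add hy]
      congr 1
      ring
    rw [indicator_of_mem (mem_Ioi.2 hy), if_pos hy, if_pos (rpow_pos_of_pos hy _),
      abs_of_pos (inv_pos.2 hγ), ← ENNReal.ofReal_mul (by positivity), one_div, ← hpow]
    congr 1
    ring
  · simp [hy]

end

theorem law_rpow_gamma_density_general {Ω : Type*} [MeasurableSpace Ω] (P : Measure Ω)
    (X : Ω → ℝ) (hX : Measurable X)
    (a s γ : ℝ) (hγ : 0 < γ)
    (hlaw : Measure.map X P = gammaScaleMeasure a s) :
    Measure.map (fun ω => X ω ^ γ) P =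
      volume.withDensity fun x =>
        ENNReal.ofReal
          (if 0 < x then
            x ^ (a / γ - 1) * Real.exp (-(x ^ (1 / γ)) / s) / (γ * Real.Gamma a * s ^ a)
          else 0) := by
  rw [← gammaScaleMeasure_map_rpow a s hγ, ← hlaw]
  exact (Measure.map_map (measurable_id.pow_const γ) hX).symm

/-- **Proposition 2 of the paper.** If `X` has the `Gamma(a, s)` distribution and `γ > 0`,
then the law of `X^γ` has density `w(x) = x^(a/γ − 1)·exp(−x^(1/γ)/s)/(γ·Γ(a)·s^a)`
with respect to Lebesgue measure on `(0, ∞)` and density `0` on `(−∞, 0]`. -/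
theorem law_rpow_gamma_density {Ω : Type*} [MeasurableSpace Ω] (P : Measure Ω)
    [IsProbabilityMeasure P] (X : Ω → ℝ) (hX : Measurable X)
    (a s γ : ℝ) (ha : 0 < a) (hs : 0 < s) (hγ : 0 < γ)
    (hlaw : Measure.map X P = gammaScaleMeasure a s) :
    Measure.map (fun ω => X ω ^ γ) P =
      volume.withDensity fun x =>
        ENNReal.ofReal
          (if 0 < x then
            x ^ (a / γ - 1) * Real.exp (-(x ^ (1 / γ)) / s) / (γ * Real.Gamma a * s ^ a)
          else 0) :=
  law_rpow_gamma_density_general P X hX a s γ hγ hlaw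
end
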